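/- The embedding commutes with substitution application up to σ-equivalence: for every SFMTT expression t in scope Δ̂ at mode m and every SFMTT (regular) substitution σ : Γ̂ ⇒ Δ̂, we have Γ̂ ⊢ ⌜t[σ]⌝ ≡σ ⌜t⌝[⌜σ⌝] in WSMTT. -/

import Mathlib

set_option autoImplicit false

/-- A mode theory: a strict 2-category of modes, modalities and 2-cells. -/
structure ModeTheory : Type 1 where
  Mode : Type
  Hom : Mode → Mode → Type
  id : (m : Mode) → Hom m m
  comp : {m n o : Mode} → Hom m n → Hom n o → Hom m o
  id_comp : ∀ {m n : Mode} (μ : Hom m n), comp (id m) μ = μ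
  comp_id : ∀ {m n : Mode} (μ : Hom m n), comp μ (id n) = μ
  comp_assoc : ∀ {m n o p : Mode} (μ : Hom m n) (ν : Hom n o) (ρ : Hom o p),
    comp (comp μ ν) ρ = comp μ (comp ν ρ)
  Cell : {m n : Mode} → Hom m n → Hom m n → Type
  cid : {m n : Mode} → (μ : Hom m n) → Cell μ μ
  vcomp : {m n : Mode} → {μ ν ρ : Hom m n} → Cell μ ν → Cell ν ρ → Cell μ ρ
  hcomp : {m n o : Mode} → {μ μ' : Hom m n} → {ν ν' : Hom n o} →
    Cell μ μ' → Cell ν ν' → Cell (comp μ ν) (comp μ' ν')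
  cid_vcomp : ∀ {m n : Mode} {μ ν : Hom m n} (α : Cell μ ν), vcomp (cid μ) α = α
  vcomp_cid : ∀ {m n : Mode} {μ ν : Hom m n} (α : Cell μ ν), vcomp α (cid ν) = α
  vcomp_assoc : ∀ {m n : Mode} {μ₁ μ₂ μ₃ μ₄ : Hom m n}
    (α : Cell μ₁ μ₂) (β : Cell μ₂ μ₃) (γ : Cell μ₃ μ₄),
    vcomp (vcomp α β) γ = vcomp α (vcomp β γ)
  hcomp_cid : ∀ {m n o : Mode} (μ : Hom m n) (ν : Hom n o),
    hcomp (cid μ) (cid ν) = cid (comp μ ν)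
  interchange : ∀ {m n o : Mode} {μ₁ μ₂ μ₃ : Hom m n} {ν₁ ν₂ ν₃ : Hom n o}
    (α : Cell μ₁ μ₂) (β : Cell μ₂ μ₃) (γ : Cell ν₁ ν₂) (δ : Cell ν₂ ν₃),
    hcomp (vcomp α β) (vcomp γ δ) = vcomp (hcomp α γ) (hcomp β δ)
  id_hcomp : ∀ {m n : Mode} {μ ν : Hom m n} (α : Cell μ ν),
    HEq (hcomp (cid (id m)) α) α
  hcomp_id : ∀ {m n : Mode} {μ ν : Hom m n} (α : Cell μ ν),
    HEq (hcomp α (cid (id n))) α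
  hcomp_assoc : ∀ {m n o p : Mode} {μ μ' : Hom m n} {ν ν' : Hom n o} {ρ ρ' : Hom o p}
    (α : Cell μ μ') (β : Cell ν ν') (γ : Cell ρ ρ'),
    HEq (hcomp (hcomp α β) γ) (hcomp α (hcomp β γ))

namespace MTT

def castCell (M : ModeTheory) {m n : M.Mode} {μ μ' ν ν' : M.Hom m n}
    (h1 : μ = μ') (h2 : ν = ν') (α : M.Cell μ ν) : M.Cell μ' ν' := h1 ▸ h2 ▸ α

/-- Scoping contexts at a mode. -/
inductive SCtx (M : ModeTheory) : M.Mode → Type where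
  | empty {m : M.Mode} : SCtx M m
  | lock {m n : M.Mode} (Γ : SCtx M n) (μ : M.Hom m n) : SCtx M m
  | ext {m n : M.Mode} (Γ : SCtx M n) (μ : M.Hom m n) : SCtx M n

/-- Lock telescopes from inner mode `m` to outer mode `n`
(`cons` adds the outermost lock). -/
inductive LockTele (M : ModeTheory) : M.Mode → M.Mode → Type where
  | nil {m : M.Mode} : LockTele M m m
  | cons {m n k : M.Mode} (ρ : M.Hom k n) (Θ : LockTele M m k) : LockTele M m n

variable (M : ModeTheory)

/-- Composite modality of a lock telescope. -/
def locks {m : M.Mode} : ∀ {n : M.Mode}, LockTele M m n → M.Hom m n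
  | _, .nil => M.id _
  | _, .cons ρ Θ => M.comp (locks Θ) ρ

/-- Appending a lock telescope to a scoping context. -/
def appendL {m : M.Mode} : ∀ {n : M.Mode}, LockTele M m n → SCtx M n → SCtx M m
  | _, .nil, Γ => Γ
  | _, .cons ρ Θ, Γ => appendL Θ (SCtx.lock Γ ρ)

/-- Concatenation of lock telescopes (`appendLT Θ Λ` has `Λ` outermost、`Θ` innermost). -/
def appendLT {m k : M.Mode} (Θ : LockTele M m k) : ∀ {n : M.Mode},
    LockTele M k n → LockTele M m n
  | _, .nil => Θ
  | _, .cons ρ Λ => .cons ρ (appendLT Θ Λ)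

/-- `Γ ,, Θ` : appending a lock telescope to a scoping context. -/
abbrev appL {m n : M.Mode} (Γ : SCtx M n) (Θ : LockTele M m n) : SCtx M m :=
  appendL M Θ Γ

/-- `Λ ++ Θ` : concatenation of lock telescopes, `Λ` outermost. -/
abbrev appLT {m n k : M.Mode} (Λ : LockTele M k n) (Θ : LockTele M m k) :
    LockTele M m n := appendLT M Θ Λ

theorem appLT_nil {m n : M.Mode} (Λ : LockTele M m n) : appLT M Λ .nil = Λ := by
  induction Λ with
  | nil => rfl
  | cons ρ Λ ih => show LockTele.cons ρ (appLT M Λ .nil) = _; rw [ih]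

theorem locks_append {m n k : M.Mode} (Λ : LockTele M k n) (Θ : LockTele M m k) :
    locks M (appLT M Λ Θ) = M.comp (locks M Θ) (locks M Λ) := by
  induction Λ with
  | nil => show locks M Θ = M.comp (locks M Θ) (M.id _); rw [M.comp_id]
  | cons ρ Λ ih =>
      show M.comp (locks M (appLT M Λ Θ)) ρ = _
      rw [ih, M.comp_assoc]; rfl

theorem appL_append {m n k : M.Mode} (Γ : SCtx M n) (Λ : LockTele M k n)
    (Θ : LockTele M m k) : appL M (appL M Γ Λ) Θ = appL M Γ (appLT M Λ Θ) := by
  induction Λ with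
  | nil => rfl
  | cons ρ Λ ih => exact ih (SCtx.lock Γ ρ)

theorem locks_cons_nil {m n : M.Mode} (μ : M.Hom m n) :
    locks M (LockTele.cons μ LockTele.nil) = μ := by
  show M.comp (M.id m) μ = μ; exact M.id_comp μ

/-- Variables of the scoping context `Γ ,, Θ`. -/
def VarIn {m : M.Mode} : ∀ {n : M.Mode}, SCtx M n → LockTele M m n → Type
  | _, .empty, _ => PEmpty
  | _, .lock Γ ρ, Θ => VarIn Γ (.cons ρ Θ)
  | _, @SCtx.ext _ k _ Γ μ, Θ =>
      (Σ' (h : k = m), M.Cell (h ▸ μ) (locks M Θ)) ⊕ VarIn Γ Θ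

/-- The zero variable `v0^α`. -/
def VarIn.vz {n m : M.Mode} {Γ : SCtx M n} {μ : M.Hom m n} {Θ : LockTele M m n}
    (α : M.Cell μ (locks M Θ)) : VarIn M (SCtx.ext Γ μ) Θ := Sum.inl ⟨rfl, α⟩

/-- The successor variable `suc v`. -/
def VarIn.sucv {n m k : M.Mode} {Γ : SCtx M n} {μ : M.Hom k n} {Θ : LockTele M m n}
    (v : VarIn M Γ Θ) : VarIn M (SCtx.ext Γ μ) Θ := Sum.inr v

theorem varIn_append {m k : M.Mode} (Λ : LockTele M m k) :
    ∀ {n : M.Mode} (Γ : SCtx M n) (Θ : LockTele M k n),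
      VarIn M (appL M Γ Θ) Λ = VarIn M Γ (appLT M Θ Λ)
  | _, Γ, .nil => rfl
  | _, Γ, .cons ρ Θ => varIn_append Λ (SCtx.lock Γ ρ) Θ


/-- Substitution-free (SFMTT) expressions over a scoping context. -/
inductive Expr (M : ModeTheory) : ∀ {m : M.Mode}, SCtx M m → Type where
  | var {m : M.Mode} {Γ : SCtx M m} (v : VarIn M Γ LockTele.nil) : Expr M Γ
  | bool {m : M.Mode} {Γ : SCtx M m} : Expr M Γ
  | tt {m : M.Mode} {Γ : SCtx M m} : Expr M Γ
  | ff {m : M.Mode} {Γ : SCtx M m} : Expr M Γ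
  | ifte {m : M.Mode} {Γ : SCtx M m} (A : Expr M (SCtx.ext Γ (M.id m)))
      (s t t' : Expr M Γ) : Expr M Γ
  | arrow {m n : M.Mode} {Γ : SCtx M n} (μ : M.Hom m n)
      (A : Expr M (SCtx.lock Γ μ)) (B : Expr M (SCtx.ext Γ μ)) : Expr M Γ
  | lam {m n : M.Mode} {Γ : SCtx M n} (μ : M.Hom m n)
      (t : Expr M (SCtx.ext Γ μ)) : Expr M Γ
  | app {m n : M.Mode} {Γ : SCtx M n} (μ : M.Hom m n)
      (f : Expr M Γ) (t : Expr M (SCtx.lock Γ μ)) : Expr M Γ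
  | modTy {m n : M.Mode} {Γ : SCtx M n} (μ : M.Hom m n)
      (A : Expr M (SCtx.lock Γ μ)) : Expr M Γ
  | modTm {m n : M.Mode} {Γ : SCtx M n} (μ : M.Hom m n)
      (t : Expr M (SCtx.lock Γ μ)) : Expr M Γ
  | letmod {m n o : M.Mode} {Γ : SCtx M o} (μ : M.Hom m n) (ν : M.Hom n o)
      (A : Expr M (SCtx.lock (SCtx.lock Γ ν) μ)) (B : Expr M (SCtx.ext Γ ν))
      (t : Expr M (SCtx.lock Γ ν)) (s : Expr M (SCtx.ext Γ (M.comp μ ν))) : Expr M Γ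

/-- Atomic SFMTT renamings. -/
inductive ARen (M : ModeTheory) : ∀ {m : M.Mode}, SCtx M m → SCtx M m → Type where
  | done {m : M.Mode} {Γ : SCtx M m} : ARen M Γ SCtx.empty
  | id {m : M.Mode} {Γ : SCtx M m} : ARen M Γ Γ
  | wk {m k : M.Mode} {Γ Δ : SCtx M m} (σ : ARen M Γ Δ) (μ : M.Hom k m) :
      ARen M (SCtx.ext Γ μ) Δ
  | lock {m n : M.Mode} {Γ Δ : SCtx M n} (σ : ARen M Γ Δ) (μ : M.Hom m n) :
      ARen M (SCtx.lock Γ μ) (SCtx.lock Δ μ)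
  | key {m n : M.Mode} (Γ : SCtx M m) (Θ Ψ : LockTele M n m)
      (α : M.Cell (locks M Θ) (locks M Ψ)) : ARen M (appL M Γ Ψ) (appL M Γ Θ)
  | ext {m n : M.Mode} {Γ Δ : SCtx M n} (σ : ARen M Γ Δ) {μ : M.Hom m n}
      (v : VarIn M Γ (LockTele.cons μ LockTele.nil)) : ARen M Γ (SCtx.ext Δ μ)

/-- Atomic SFMTT substitutions. -/
inductive ASub (M : ModeTheory) : ∀ {m : M.Mode}, SCtx M m → SCtx M m → Type where
  | done {m : M.Mode} {Γ : SCtx M m} : ASub M Γ SCtx.empty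
  | id {m : M.Mode} {Γ : SCtx M m} : ASub M Γ Γ
  | wk {m k : M.Mode} {Γ Δ : SCtx M m} (σ : ASub M Γ Δ) (μ : M.Hom k m) :
      ASub M (SCtx.ext Γ μ) Δ
  | lock {m n : M.Mode} {Γ Δ : SCtx M n} (σ : ASub M Γ Δ) (μ : M.Hom m n) :
      ASub M (SCtx.lock Γ μ) (SCtx.lock Δ μ)
  | key {m n : M.Mode} (Γ : SCtx M m) (Θ Ψ : LockTele M n m)
      (α : M.Cell (locks M Θ) (locks M Ψ)) : ASub M (appL M Γ Ψ) (appL M Γ Θ)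
  | ext {m n : M.Mode} {Γ Δ : SCtx M n} (σ : ASub M Γ Δ) {μ : M.Hom m n}
      (t : Expr M (SCtx.lock Γ μ)) : ASub M Γ (SCtx.ext Δ μ)

/-- Action of a 2-cell between lock telescopes on variables. -/
def transf {n k : M.Mode} {Θ Ψ : LockTele M n k}
    (γ : M.Cell (locks M Θ) (locks M Ψ)) :
    ∀ {l : M.Mode} (Γ : SCtx M l) (Λ : LockTele M k l),
      VarIn M Γ (appLT M Λ Θ) → VarIn M Γ (appLT M Λ Ψ)
  | _, .empty, _, v => PEmpty.elim v
  | _, .lock Γ ρ, Λ, v => transf γ Γ (.cons ρ Λ) v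
  | _, .ext Γ μ, Λ, v =>
      match v with
      | Sum.inl ⟨h, β⟩ =>
          Sum.inl ⟨h, M.vcomp β (castCell M (locks_append M Λ Θ).symm
            (locks_append M Λ Ψ).symm (M.hcomp γ (M.cid (locks M Λ))))⟩
      | Sum.inr w => Sum.inr (transf γ Γ Λ w)


/-- The zero variable used in liftings, annotated with an identity 2-cell. -/
def vzeroLift {m n : M.Mode} {Γ : SCtx M n} (μ : M.Hom m n) :
    VarIn M (SCtx.ext Γ μ) (LockTele.cons μ LockTele.nil) :=
  Sum.inl ⟨rfl, castCell M rfl (locks_cons_nil M μ).symm (M.cid μ)⟩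

/-- Action of an atomic renaming under a lock telescope on a variable. -/
def arenVar : ∀ {m : M.Mode} {Γ Δ : SCtx M m}, ARen M Γ Δ →
    ∀ {n : M.Mode} (Λ : LockTele M n m), VarIn M Δ Λ → VarIn M Γ Λ
  | _, _, _, .id, _, _, v => v
  | _, _, _, .done, _, _, v => PEmpty.elim v
  | _, _, _, .wk σ _, _, Λ, v => Sum.inr (arenVar σ Λ v)
  | _, _, _, .lock σ μ, _, Λ, v => arenVar σ (.cons μ Λ) v
  | _, _, _, .key Γ₀ Θ Ψ α, _, Λ, v =>
      cast (varIn_append M Λ Γ₀ Ψ).symm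
        (transf M (castCell M (locks_append M Θ Λ).symm (locks_append M Ψ Λ).symm
            (M.hcomp (M.cid (locks M Λ)) α)) Γ₀ LockTele.nil
          (cast (varIn_append M Λ Γ₀ Θ) v))
  | _, _, _, .ext σ w, _, Λ, v =>
      match v with
      | Sum.inl ⟨h, β⟩ =>
          (by cases h; exact
            transf M (castCell M (locks_cons_nil M _).symm rfl β) _ LockTele.nil w)
      | Sum.inr v' => arenVar σ Λ v'

/-- The weakening atomic renaming `π`. -/
def piA {m k : M.Mode} {Γ : SCtx M m} (μ : M.Hom k m) : ARen M (SCtx.ext Γ μ) Γ :=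
  ARen.wk ARen.id μ

/-- Lifting of an atomic renaming. -/
def liftA {m k : M.Mode} {Γ Δ : SCtx M m} (σ : ARen M Γ Δ) (μ : M.Hom k m) :
    ARen M (SCtx.ext Γ μ) (SCtx.ext Δ μ) :=
  ARen.ext (ARen.wk σ μ) (vzeroLift M μ)

/-- Locking an atomic renaming by all locks of a lock telescope. -/
def lockTeleA {m : M.Mode} {Γ Δ : SCtx M m} (σ : ARen M Γ Δ) :
    ∀ {n : M.Mode} (Λ : LockTele M n m), ARen M (appL M Γ Λ) (appL M Δ Λ)
  | _, .nil => σ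
  | _, .cons ρ Λ => lockTeleA (ARen.lock σ ρ) Λ

/-- Action of an atomic renaming on an SFMTT expression. -/
def arenExpr : ∀ {m : M.Mode} {Δ : SCtx M m}, Expr M Δ →
    ∀ {Γ : SCtx M m}, ARen M Γ Δ → Expr M Γ
  | _, _, .var v, _, σ => .var (arenVar M σ LockTele.nil v)
  | _, _, .bool, _, _ => .bool
  | _, _, .tt, _, _ => .tt
  | _, _, .ff, _, _ => .ff
  | _, _, .ifte A s t t', _, σ =>
      .ifte (arenExpr A (liftA M σ (M.id _))) (arenExpr s σ) (arenExpr t σ) (arenExpr t' σ)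
  | _, _, .arrow μ A B, _, σ =>
      .arrow μ (arenExpr A (ARen.lock σ μ)) (arenExpr B (liftA M σ μ))
  | _, _, .lam μ t, _, σ => .lam μ (arenExpr t (liftA M σ μ))
  | _, _, .app μ f t, _, σ => .app μ (arenExpr f σ) (arenExpr t (ARen.lock σ μ))
  | _, _, .modTy μ A, _, σ => .modTy μ (arenExpr A (ARen.lock σ μ))
  | _, _, .modTm μ t, _, σ => .modTm μ (arenExpr t (ARen.lock σ μ))
  | _, _, .letmod μ ν A B t s, _, σ =>
      .letmod μ ν (arenExpr A (ARen.lock (ARen.lock σ ν) μ)) (arenExpr B (liftA M σ ν))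
        (arenExpr t (ARen.lock σ ν)) (arenExpr s (liftA M σ (M.comp μ ν)))


/-- View a variable of `Γ ,, Λ` as a variable of the full context. -/
def toVarNil {n m : M.Mode} {Γ : SCtx M n} {Λ : LockTele M m n}
    (v : VarIn M Γ Λ) : VarIn M (appL M Γ Λ) LockTele.nil :=
  cast (by rw [varIn_append, appLT_nil]) v

/-- View a variable of `Γ ,, Λ` as an expression. -/
def varExpr {n m : M.Mode} {Γ : SCtx M n} {Λ : LockTele M m n}
    (v : VarIn M Γ Λ) : Expr M (appL M Γ Λ) :=
  Expr.var (toVarNil M v)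

/-- Action of an atomic substitution under a lock telescope on a variable. -/
def asubVar : ∀ {m : M.Mode} {Γ Δ : SCtx M m}, ASub M Γ Δ →
    ∀ {n : M.Mode} (Λ : LockTele M n m), VarIn M Δ Λ → Expr M (appL M Γ Λ)
  | _, _, _, .id, _, Λ, v => varExpr M v
  | _, _, _, .done, _, _, v => PEmpty.elim v
  | _, _, _, .wk σ μ, _, Λ, v =>
      arenExpr M (asubVar σ Λ v) (lockTeleA M (piA M μ) Λ)
  | _, _, _, .lock σ μ, _, Λ, v => asubVar σ (.cons μ Λ) v
  | _, _, _, .key Γ₀ Θ Ψ α, _, Λ, v =>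
      varExpr M (cast (varIn_append M Λ Γ₀ Ψ).symm
        (transf M (castCell M (locks_append M Θ Λ).symm (locks_append M Ψ Λ).symm
            (M.hcomp (M.cid (locks M Λ)) α)) Γ₀ LockTele.nil
          (cast (varIn_append M Λ Γ₀ Θ) v)))
  | _, _, _, @ASub.ext _ _ _ Γ Δ σ μ t, _, Λ, v =>
      match v with
      | Sum.inl ⟨h, β⟩ =>
          (by cases h; exact
            arenExpr M t (ARen.key Γ (LockTele.cons μ LockTele.nil) Λ
              (castCell M (locks_cons_nil M μ).symm rfl β)))
      | Sum.inr v' => asubVar σ Λ v'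

/-- Lifting of an atomic substitution. -/
def liftS {m k : M.Mode} {Γ Δ : SCtx M m} (σ : ASub M Γ Δ) (μ : M.Hom k m) :
    ASub M (SCtx.ext Γ μ) (SCtx.ext Δ μ) :=
  ASub.ext (ASub.wk σ μ) (Expr.var (vzeroLift M μ))

/-- Locking an atomic substitution by all locks of a lock telescope. -/
def lockTeleS {m : M.Mode} {Γ Δ : SCtx M m} (σ : ASub M Γ Δ) :
    ∀ {n : M.Mode} (Λ : LockTele M n m), ASub M (appL M Γ Λ) (appL M Δ Λ)
  | _, .nil => σ
  | _, .cons ρ Λ => lockTeleS (ASub.lock σ ρ) Λ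

/-- Action of an atomic substitution on an SFMTT expression. -/
def asubExpr : ∀ {m : M.Mode} {Δ : SCtx M m}, Expr M Δ →
    ∀ {Γ : SCtx M m}, ASub M Γ Δ → Expr M Γ
  | _, _, .var v, _, σ => asubVar M σ LockTele.nil v
  | _, _, .bool, _, _ => .bool
  | _, _, .tt, _, _ => .tt
  | _, _, .ff, _, _ => .ff
  | _, _, .ifte A s t t', _, σ =>
      .ifte (asubExpr A (liftS M σ (M.id _))) (asubExpr s σ) (asubExpr t σ) (asubExpr t' σ)
  | _, _, .arrow μ A B, _, σ =>
      .arrow μ (asubExpr A (ASub.lock σ μ)) (asubExpr B (liftS M σ μ))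
  | _, _, .lam μ t, _, σ => .lam μ (asubExpr t (liftS M σ μ))
  | _, _, .app μ f t, _, σ => .app μ (asubExpr f σ) (asubExpr t (ASub.lock σ μ))
  | _, _, .modTy μ A, _, σ => .modTy μ (asubExpr A (ASub.lock σ μ))
  | _, _, .modTm μ t, _, σ => .modTm μ (asubExpr t (ASub.lock σ μ))
  | _, _, .letmod μ ν A B t s, _, σ =>
      .letmod μ ν (asubExpr A (ASub.lock (ASub.lock σ ν) μ)) (asubExpr B (liftS M σ ν))
        (asubExpr t (ASub.lock σ ν)) (asubExpr s (liftS M σ (M.comp μ ν)))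


/-- Regular SFMTT renamings: finite sequences of atomic renamings. -/
inductive Ren (M : ModeTheory) : ∀ {m : M.Mode}, SCtx M m → SCtx M m → Type where
  | id {m : M.Mode} {Γ : SCtx M m} : Ren M Γ Γ
  | snoc {m : M.Mode} {Γ Δ Ξ : SCtx M m} (σ : Ren M Δ Ξ) (τ : ARen M Γ Δ) : Ren M Γ Ξ

/-- Regular SFMTT substitutions: finite sequences of atomic substitutions. -/
inductive Sub (M : ModeTheory) : ∀ {m : M.Mode}, SCtx M m → SCtx M m → Type where
  | id {m : M.Mode} {Γ : SCtx M m} : Sub M Γ Γ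
  | snoc {m : M.Mode} {Γ Δ Ξ : SCtx M m} (σ : Sub M Δ Ξ) (τ : ASub M Γ Δ) : Sub M Γ Ξ

/-- Mixed sequences of atomic renamings and atomic substitutions. -/
inductive Mix (M : ModeTheory) : ∀ {m : M.Mode}, SCtx M m → SCtx M m → Type where
  | id {m : M.Mode} {Γ : SCtx M m} : Mix M Γ Γ
  | snocR {m : M.Mode} {Γ Δ Ξ : SCtx M m} (σ : Mix M Δ Ξ) (τ : ARen M Γ Δ) : Mix M Γ Ξ
  | snocS {m : M.Mode} {Γ Δ Ξ : SCtx M m} (σ : Mix M Δ Ξ) (τ : ASub M Γ Δ) : Mix M Γ Ξ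

/-- Action of a regular renaming on an expression. -/
def renExpr {m : M.Mode} {Ξ : SCtx M m} (t : Expr M Ξ) :
    ∀ {Γ : SCtx M m}, Ren M Γ Ξ → Expr M Γ
  | _, .id => t
  | _, .snoc σ τ => arenExpr M (renExpr t σ) τ

/-- Action of a regular substitution on an expression. -/
def subExpr {m : M.Mode} {Ξ : SCtx M m} (t : Expr M Ξ) :
    ∀ {Γ : SCtx M m}, Sub M Γ Ξ → Expr M Γ
  | _, .id => t
  | _, .snoc σ τ => asubExpr M (subExpr t σ) τ

/-- Action of a mixed sequence on an expression. -/
def mixExpr {m : M.Mode} {Ξ : SCtx M m} (t : Expr M Ξ) :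
    ∀ {Γ : SCtx M m}, Mix M Γ Ξ → Expr M Γ
  | _, .id => t
  | _, .snocR σ τ => arenExpr M (mixExpr t σ) τ
  | _, .snocS σ τ => asubExpr M (mixExpr t σ) τ

/-- Concatenation of regular substitutions (`concatSub σ τ` applies `σ` first). -/
def concatSub {m : M.Mode} {Δ Ξ : SCtx M m} (σ : Sub M Δ Ξ) :
    ∀ {Γ : SCtx M m}, Sub M Γ Δ → Sub M Γ Ξ
  | _, .id => σ
  | _, .snoc τ a => .snoc (concatSub σ τ) a

/-- Componentwise lifting of a regular renaming. -/
def liftRen {m k : M.Mode} (μ : M.Hom k m) :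
    ∀ {Γ Δ : SCtx M m}, Ren M Γ Δ → Ren M (SCtx.ext Γ μ) (SCtx.ext Δ μ)
  | _, _, .id => .id
  | _, _, .snoc σ τ => .snoc (liftRen μ σ) (liftA M τ μ)

/-- Componentwise lifting of a regular substitution. -/
def liftSub {m k : M.Mode} (μ : M.Hom k m) :
    ∀ {Γ Δ : SCtx M m}, Sub M Γ Δ → Sub M (SCtx.ext Γ μ) (SCtx.ext Δ μ)
  | _, _, .id => .id
  | _, _, .snoc σ τ => .snoc (liftSub μ σ) (liftS M τ μ)

/-- Componentwise lifting of a mixed sequence. -/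
def liftMix {m k : M.Mode} (μ : M.Hom k m) :
    ∀ {Γ Δ : SCtx M m}, Mix M Γ Δ → Mix M (SCtx.ext Γ μ) (SCtx.ext Δ μ)
  | _, _, .id => .id
  | _, _, .snocR σ τ => .snocR (liftMix μ σ) (liftA M τ μ)
  | _, _, .snocS σ τ => .snocS (liftMix μ σ) (liftS M τ μ)

/-- Componentwise locking of a regular renaming. -/
def lockRen {m n : M.Mode} (μ : M.Hom m n) :
    ∀ {Γ Δ : SCtx M n}, Ren M Γ Δ → Ren M (SCtx.lock Γ μ) (SCtx.lock Δ μ)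
  | _, _, .id => .id
  | _, _, .snoc σ τ => .snoc (lockRen μ σ) (ARen.lock τ μ)

/-- Componentwise locking of a regular substitution. -/
def lockSub {m n : M.Mode} (μ : M.Hom m n) :
    ∀ {Γ Δ : SCtx M n}, Sub M Γ Δ → Sub M (SCtx.lock Γ μ) (SCtx.lock Δ μ)
  | _, _, .id => .id
  | _, _, .snoc σ τ => .snoc (lockSub μ σ) (ASub.lock τ μ)

/-- Componentwise locking of a mixed sequence. -/
def lockMix {m n : M.Mode} (μ : M.Hom m n) :
    ∀ {Γ Δ : SCtx M n}, Mix M Γ Δ → Mix M (SCtx.lock Γ μ) (SCtx.lock Δ μ)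
  | _, _, .id => .id
  | _, _, .snocR σ τ => .snocR (lockMix μ σ) (ARen.lock τ μ)
  | _, _, .snocS σ τ => .snocS (lockMix μ σ) (ASub.lock τ μ)

/-- Locking a regular substitution by all locks of a lock telescope. -/
def lockTeleSub {m : M.Mode} {Γ Δ : SCtx M m} (σ : Sub M Γ Δ) :
    ∀ {n : M.Mode} (Λ : LockTele M n m), Sub M (appL M Γ Λ) (appL M Δ Λ)
  | _, .nil => σ
  | _, .cons ρ Λ => lockTeleSub (lockSub M ρ σ) Λ

/-- Locking a mixed sequence by all locks of a lock telescope. -/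
def lockTeleMix {m : M.Mode} {Γ Δ : SCtx M m} (σ : Mix M Γ Δ) :
    ∀ {n : M.Mode} (Λ : LockTele M n m), Mix M (appL M Γ Λ) (appL M Δ Λ)
  | _, .nil => σ
  | _, .cons ρ Λ => lockTeleMix (lockMix M ρ σ) Λ

/-- Scoping telescopes from inner mode `m` to outer mode `n`
(built from the inner end, as in the paper). -/
inductive Tele (M : ModeTheory) : M.Mode → M.Mode → Type where
  | nil {m : M.Mode} : Tele M m m
  | ext {m n k : M.Mode} (Φ : Tele M m n) (μ : M.Hom k m) : Tele M m n
  | lock {m n k : M.Mode} (Φ : Tele M m n) (μ : M.Hom k m) : Tele M k n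

/-- Appending a scoping telescope to a scoping context (auxiliary argument order). -/
def appT' : ∀ {m n : M.Mode}, Tele M m n → SCtx M n → SCtx M m
  | _, _, .nil, Γ => Γ
  | _, _, .ext Φ μ, Γ => SCtx.ext (appT' Φ Γ) μ
  | _, _, .lock Φ μ, Γ => SCtx.lock (appT' Φ Γ) μ

/-- Appending a scoping telescope to a scoping context. -/
abbrev appT {n m : M.Mode} (Γ : SCtx M n) (Φ : Tele M m n) : SCtx M m := appT' M Φ Γ

/-- Applying a scoping telescope to an atomic renaming. -/
def teleARen {m : M.Mode} {Γ Δ : SCtx M m} (σ : ARen M Γ Δ) :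
    ∀ {n : M.Mode} (Φ : Tele M n m), ARen M (appT M Γ Φ) (appT M Δ Φ)
  | _, .nil => σ
  | _, .ext Φ μ => liftA M (teleARen σ Φ) μ
  | _, .lock Φ μ => ARen.lock (teleARen σ Φ) μ

/-- Applying a scoping telescope to an atomic substitution. -/
def teleASub {m : M.Mode} {Γ Δ : SCtx M m} (σ : ASub M Γ Δ) :
    ∀ {n : M.Mode} (Φ : Tele M n m), ASub M (appT M Γ Φ) (appT M Δ Φ)
  | _, .nil => σ
  | _, .ext Φ μ => liftS M (teleASub σ Φ) μ
  | _, .lock Φ μ => ASub.lock (teleASub σ Φ) μ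

/-- Applying a scoping telescope to a regular substitution. -/
def teleSub {m : M.Mode} {Γ Δ : SCtx M m} (σ : Sub M Γ Δ) :
    ∀ {n : M.Mode} (Φ : Tele M n m), Sub M (appT M Γ Φ) (appT M Δ Φ)
  | _, .nil => σ
  | _, .ext Φ μ => liftSub M μ (teleSub σ Φ)
  | _, .lock Φ μ => lockSub M μ (teleSub σ Φ)

/-- Applying a scoping telescope to a mixed sequence. -/
def teleMix {m : M.Mode} {Γ Δ : SCtx M m} (σ : Mix M Γ Δ) :
    ∀ {n : M.Mode} (Φ : Tele M n m), Mix M (appT M Γ Φ) (appT M Δ Φ)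
  | _, .nil => σ
  | _, .ext Φ μ => liftMix M μ (teleMix σ Φ)
  | _, .lock Φ μ => lockMix M μ (teleMix σ Φ)

/-- Observational equivalence of regular SFMTT substitutions. -/
def ObsEq {m : M.Mode} {Γ Δ : SCtx M m} (σ τ : Sub M Γ Δ) : Prop :=
  ∀ (t : Expr M Δ), subExpr M t σ = subExpr M t τ


mutual
/-- WSMTT expressions (with explicit substitutions). -/
inductive WExpr (M : ModeTheory) : ∀ {m : M.Mode}, SCtx M m → Type where
  | vzero {m n : M.Mode} {Γ : SCtx M n} (μ : M.Hom m n) :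
      WExpr M (SCtx.lock (SCtx.ext Γ μ) μ)
  | sub {m : M.Mode} {Δ : SCtx M m} (t : WExpr M Δ) {Γ : SCtx M m}
      (σ : WSub M Γ Δ) : WExpr M Γ
  | bool {m : M.Mode} {Γ : SCtx M m} : WExpr M Γ
  | tt {m : M.Mode} {Γ : SCtx M m} : WExpr M Γ
  | ff {m : M.Mode} {Γ : SCtx M m} : WExpr M Γ
  | ifte {m : M.Mode} {Γ : SCtx M m} (A : WExpr M (SCtx.ext Γ (M.id m)))
      (s t t' : WExpr M Γ) : WExpr M Γ
  | arrow {m n : M.Mode} {Γ : SCtx M n} (μ : M.Hom m n)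
      (A : WExpr M (SCtx.lock Γ μ)) (B : WExpr M (SCtx.ext Γ μ)) : WExpr M Γ
  | lam {m n : M.Mode} {Γ : SCtx M n} (μ : M.Hom m n)
      (t : WExpr M (SCtx.ext Γ μ)) : WExpr M Γ
  | app {m n : M.Mode} {Γ : SCtx M n} (μ : M.Hom m n)
      (f : WExpr M Γ) (t : WExpr M (SCtx.lock Γ μ)) : WExpr M Γ
  | modTy {m n : M.Mode} {Γ : SCtx M n} (μ : M.Hom m n)
      (A : WExpr M (SCtx.lock Γ μ)) : WExpr M Γ
  | modTm {m n : M.Mode} {Γ : SCtx M n} (μ : M.Hom m n)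
      (t : WExpr M (SCtx.lock Γ μ)) : WExpr M Γ
  | letmod {m n o : M.Mode} {Γ : SCtx M o} (μ : M.Hom m n) (ν : M.Hom n o)
      (A : WExpr M (SCtx.lock (SCtx.lock Γ ν) μ)) (B : WExpr M (SCtx.ext Γ ν))
      (t : WExpr M (SCtx.lock Γ ν)) (s : WExpr M (SCtx.ext Γ (M.comp μ ν))) : WExpr M Γ

/-- WSMTT explicit substitutions. -/
inductive WSub (M : ModeTheory) : ∀ {m : M.Mode}, SCtx M m → SCtx M m → Type where
  | done {m : M.Mode} {Γ : SCtx M m} : WSub M Γ SCtx.empty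
  | id {m : M.Mode} {Γ : SCtx M m} : WSub M Γ Γ
  | wk {m k : M.Mode} {Γ : SCtx M m} (μ : M.Hom k m) : WSub M (SCtx.ext Γ μ) Γ
  | comp {m : M.Mode} {Γ Δ Ξ : SCtx M m} (σ : WSub M Δ Ξ) (τ : WSub M Γ Δ) :
      WSub M Γ Ξ
  | lock {m n : M.Mode} {Γ Δ : SCtx M n} (σ : WSub M Γ Δ) (μ : M.Hom m n) :
      WSub M (SCtx.lock Γ μ) (SCtx.lock Δ μ)
  | key {m n : M.Mode} (Γ : SCtx M m) (Θ Ψ : LockTele M n m)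
      (α : M.Cell (locks M Θ) (locks M Ψ)) : WSub M (appL M Γ Ψ) (appL M Γ Θ)
  | ext {m n : M.Mode} {Γ Δ : SCtx M n} (σ : WSub M Γ Δ) {μ : M.Hom m n}
      (t : WExpr M (SCtx.lock Γ μ)) : WSub M Γ (SCtx.ext Δ μ)
end

/-- Cast a WSMTT substitution along equalities of scoping contexts. -/
def castW {m : M.Mode} {Γ Γ' Δ Δ' : SCtx M m} (h1 : Γ = Γ') (h2 : Δ = Δ')
    (σ : WSub M Γ Δ) : WSub M Γ' Δ' := h1 ▸ h2 ▸ σ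

/-- The WSMTT lifting `σ⁺ := (σ ∘ π).v0`. -/
def wlift {m k : M.Mode} {Γ Δ : SCtx M m} (σ : WSub M Γ Δ) (μ : M.Hom k m) :
    WSub M (SCtx.ext Γ μ) (SCtx.ext Δ μ) :=
  WSub.ext (WSub.comp σ (WSub.wk μ)) (WExpr.vzero μ)

/-- Locking a WSMTT substitution by all locks of a lock telescope. -/
def lockTeleW {m : M.Mode} {Γ Δ : SCtx M m} (σ : WSub M Γ Δ) :
    ∀ {n : M.Mode} (Λ : LockTele M n m), WSub M (appL M Γ Λ) (appL M Δ Λ)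
  | _, .nil => σ
  | _, .cons ρ Λ => lockTeleW (WSub.lock σ ρ) Λ

mutual
/-- σ-equivalence of WSMTT expressions. -/
inductive EqE (M : ModeTheory) : ∀ {m : M.Mode} {Γ : SCtx M m},
    WExpr M Γ → WExpr M Γ → Prop where
  | refl {m : M.Mode} {Γ : SCtx M m} (t : WExpr M Γ) : EqE M t t
  | symm {m : M.Mode} {Γ : SCtx M m} {t s : WExpr M Γ} : EqE M t s → EqE M s t
  | trans {m : M.Mode} {Γ : SCtx M m} {t s u : WExpr M Γ} :
      EqE M t s → EqE M s u → EqE M t u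
  | congSub {m : M.Mode} {Γ Δ : SCtx M m} {t₁ t₂ : WExpr M Δ} {σ₁ σ₂ : WSub M Γ Δ} :
      EqE M t₁ t₂ → EqS M σ₁ σ₂ → EqE M (WExpr.sub t₁ σ₁) (WExpr.sub t₂ σ₂)
  | congIfte {m : M.Mode} {Γ : SCtx M m} {A₁ A₂ : WExpr M (SCtx.ext Γ (M.id m))}
      {s₁ s₂ t₁ t₂ u₁ u₂ : WExpr M Γ} :
      EqE M A₁ A₂ → EqE M s₁ s₂ → EqE M t₁ t₂ → EqE M u₁ u₂ →
      EqE M (WExpr.ifte A₁ s₁ t₁ u₁) (WExpr.ifte A₂ s₂ t₂ u₂)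
  | congArrow {m n : M.Mode} {Γ : SCtx M n} (μ : M.Hom m n)
      {A₁ A₂ : WExpr M (SCtx.lock Γ μ)} {B₁ B₂ : WExpr M (SCtx.ext Γ μ)} :
      EqE M A₁ A₂ → EqE M B₁ B₂ → EqE M (WExpr.arrow μ A₁ B₁) (WExpr.arrow μ A₂ B₂)
  | congLam {m n : M.Mode} {Γ : SCtx M n} (μ : M.Hom m n)
      {t₁ t₂ : WExpr M (SCtx.ext Γ μ)} :
      EqE M t₁ t₂ → EqE M (WExpr.lam μ t₁) (WExpr.lam μ t₂)
  | congApp {m n : M.Mode} {Γ : SCtx M n} (μ : M.Hom m n) {f₁ f₂ : WExpr M Γ}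
      {t₁ t₂ : WExpr M (SCtx.lock Γ μ)} :
      EqE M f₁ f₂ → EqE M t₁ t₂ → EqE M (WExpr.app μ f₁ t₁) (WExpr.app μ f₂ t₂)
  | congModTy {m n : M.Mode} {Γ : SCtx M n} (μ : M.Hom m n)
      {A₁ A₂ : WExpr M (SCtx.lock Γ μ)} :
      EqE M A₁ A₂ → EqE M (WExpr.modTy μ A₁) (WExpr.modTy μ A₂)
  | congModTm {m n : M.Mode} {Γ : SCtx M n} (μ : M.Hom m n)
      {t₁ t₂ : WExpr M (SCtx.lock Γ μ)} :
      EqE M t₁ t₂ → EqE M (WExpr.modTm μ t₁) (WExpr.modTm μ t₂)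
  | congLetmod {m n o : M.Mode} {Γ : SCtx M o} (μ : M.Hom m n) (ν : M.Hom n o)
      {A₁ A₂ : WExpr M (SCtx.lock (SCtx.lock Γ ν) μ)} {B₁ B₂ : WExpr M (SCtx.ext Γ ν)}
      {t₁ t₂ : WExpr M (SCtx.lock Γ ν)} {s₁ s₂ : WExpr M (SCtx.ext Γ (M.comp μ ν))} :
      EqE M A₁ A₂ → EqE M B₁ B₂ → EqE M t₁ t₂ → EqE M s₁ s₂ →
      EqE M (WExpr.letmod μ ν A₁ B₁ t₁ s₁) (WExpr.letmod μ ν A₂ B₂ t₂ s₂)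
  | subId {m : M.Mode} {Γ : SCtx M m} (t : WExpr M Γ) :
      EqE M (WExpr.sub t WSub.id) t
  | subComp {m : M.Mode} {Γ Δ Ξ : SCtx M m} (t : WExpr M Ξ) (σ : WSub M Δ Ξ)
      (τ : WSub M Γ Δ) :
      EqE M (WExpr.sub t (WSub.comp σ τ)) (WExpr.sub (WExpr.sub t σ) τ)
  | boolSub {m : M.Mode} {Γ Δ : SCtx M m} (σ : WSub M Γ Δ) :
      EqE M (WExpr.sub WExpr.bool σ) WExpr.bool
  | ttSub {m : M.Mode} {Γ Δ : SCtx M m} (σ : WSub M Γ Δ) :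
      EqE M (WExpr.sub WExpr.tt σ) WExpr.tt
  | ffSub {m : M.Mode} {Γ Δ : SCtx M m} (σ : WSub M Γ Δ) :
      EqE M (WExpr.sub WExpr.ff σ) WExpr.ff
  | ifteSub {m : M.Mode} {Γ Δ : SCtx M m} (A : WExpr M (SCtx.ext Δ (M.id m)))
      (s t t' : WExpr M Δ) (σ : WSub M Γ Δ) :
      EqE M (WExpr.sub (WExpr.ifte A s t t') σ)
        (WExpr.ifte (WExpr.sub A (wlift M σ (M.id m))) (WExpr.sub s σ)
          (WExpr.sub t σ) (WExpr.sub t' σ))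
  | arrowSub {m n : M.Mode} {Γ Δ : SCtx M n} (μ : M.Hom m n)
      (A : WExpr M (SCtx.lock Δ μ)) (B : WExpr M (SCtx.ext Δ μ)) (σ : WSub M Γ Δ) :
      EqE M (WExpr.sub (WExpr.arrow μ A B) σ)
        (WExpr.arrow μ (WExpr.sub A (WSub.lock σ μ)) (WExpr.sub B (wlift M σ μ)))
  | lamSub {m n : M.Mode} {Γ Δ : SCtx M n} (μ : M.Hom m n)
      (t : WExpr M (SCtx.ext Δ μ)) (σ : WSub M Γ Δ) :
      EqE M (WExpr.sub (WExpr.lam μ t) σ) (WExpr.lam μ (WExpr.sub t (wlift M σ μ)))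
  | appSub {m n : M.Mode} {Γ Δ : SCtx M n} (μ : M.Hom m n) (f : WExpr M Δ)
      (t : WExpr M (SCtx.lock Δ μ)) (σ : WSub M Γ Δ) :
      EqE M (WExpr.sub (WExpr.app μ f t) σ)
        (WExpr.app μ (WExpr.sub f σ) (WExpr.sub t (WSub.lock σ μ)))
  | modTySub {m n : M.Mode} {Γ Δ : SCtx M n} (μ : M.Hom m n)
      (A : WExpr M (SCtx.lock Δ μ)) (σ : WSub M Γ Δ) :
      EqE M (WExpr.sub (WExpr.modTy μ A) σ) (WExpr.modTy μ (WExpr.sub A (WSub.lock σ μ)))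
  | modTmSub {m n : M.Mode} {Γ Δ : SCtx M n} (μ : M.Hom m n)
      (t : WExpr M (SCtx.lock Δ μ)) (σ : WSub M Γ Δ) :
      EqE M (WExpr.sub (WExpr.modTm μ t) σ) (WExpr.modTm μ (WExpr.sub t (WSub.lock σ μ)))
  | letmodSub {m n o : M.Mode} {Γ Δ : SCtx M o} (μ : M.Hom m n) (ν : M.Hom n o)
      (A : WExpr M (SCtx.lock (SCtx.lock Δ ν) μ)) (B : WExpr M (SCtx.ext Δ ν))
      (t : WExpr M (SCtx.lock Δ ν)) (s : WExpr M (SCtx.ext Δ (M.comp μ ν)))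
      (σ : WSub M Γ Δ) :
      EqE M (WExpr.sub (WExpr.letmod μ ν A B t s) σ)
        (WExpr.letmod μ ν (WExpr.sub A (WSub.lock (WSub.lock σ ν) μ))
          (WExpr.sub B (wlift M σ ν)) (WExpr.sub t (WSub.lock σ ν))
          (WExpr.sub s (wlift M σ (M.comp μ ν))))
  | extVar {m n : M.Mode} {Γ Δ : SCtx M n} (σ : WSub M Γ Δ) {μ : M.Hom m n}
      (t : WExpr M (SCtx.lock Γ μ)) :
      EqE M (WExpr.sub (WExpr.vzero μ) (WSub.lock (WSub.ext σ t) μ)) t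

/-- σ-equivalence of WSMTT substitutions. -/
inductive EqS (M : ModeTheory) : ∀ {m : M.Mode} {Γ Δ : SCtx M m},
    WSub M Γ Δ → WSub M Γ Δ → Prop where
  | refl {m : M.Mode} {Γ Δ : SCtx M m} (σ : WSub M Γ Δ) : EqS M σ σ
  | symm {m : M.Mode} {Γ Δ : SCtx M m} {σ τ : WSub M Γ Δ} : EqS M σ τ → EqS M τ σ
  | trans {m : M.Mode} {Γ Δ : SCtx M m} {σ τ ρ : WSub M Γ Δ} :
      EqS M σ τ → EqS M τ ρ → EqS M σ ρ
  | congComp {m : M.Mode} {Γ Δ Ξ : SCtx M m} {σ₁ σ₂ : WSub M Δ Ξ}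
      {τ₁ τ₂ : WSub M Γ Δ} : EqS M σ₁ σ₂ → EqS M τ₁ τ₂ →
      EqS M (WSub.comp σ₁ τ₁) (WSub.comp σ₂ τ₂)
  | congLock {m n : M.Mode} {Γ Δ : SCtx M n} {σ₁ σ₂ : WSub M Γ Δ} (μ : M.Hom m n) :
      EqS M σ₁ σ₂ → EqS M (WSub.lock σ₁ μ) (WSub.lock σ₂ μ)
  | congExt {m n : M.Mode} {Γ Δ : SCtx M n} {σ₁ σ₂ : WSub M Γ Δ} {μ : M.Hom m n}
      {t₁ t₂ : WExpr M (SCtx.lock Γ μ)} : EqS M σ₁ σ₂ → EqE M t₁ t₂ →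
      EqS M (WSub.ext σ₁ t₁) (WSub.ext σ₂ t₂)
  | idLeft {m : M.Mode} {Γ Δ : SCtx M m} (σ : WSub M Γ Δ) :
      EqS M (WSub.comp WSub.id σ) σ
  | idRight {m : M.Mode} {Γ Δ : SCtx M m} (σ : WSub M Γ Δ) :
      EqS M (WSub.comp σ WSub.id) σ
  | compAssoc {m : M.Mode} {Γ Δ Ξ Ω : SCtx M m} (σ : WSub M Ξ Ω) (τ : WSub M Δ Ξ)
      (ρ : WSub M Γ Δ) :
      EqS M (WSub.comp (WSub.comp σ τ) ρ) (WSub.comp σ (WSub.comp τ ρ))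
  | emptyUnique {m : M.Mode} {Γ : SCtx M m} (σ : WSub M Γ SCtx.empty) :
      EqS M σ WSub.done
  | extWeaken {m n : M.Mode} {Γ Δ : SCtx M n} (σ : WSub M Γ Δ) {μ : M.Hom m n}
      (t : WExpr M (SCtx.lock Γ μ)) :
      EqS M (WSub.comp (WSub.wk μ) (WSub.ext σ t)) σ
  | extEta {m n : M.Mode} {Γ Δ : SCtx M n} {μ : M.Hom m n}
      (σ : WSub M Γ (SCtx.ext Δ μ)) :
      EqS M σ (WSub.ext (WSub.comp (WSub.wk μ) σ)
        (WExpr.sub (WExpr.vzero μ) (WSub.lock σ μ)))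
  | lockId {m n : M.Mode} {Γ : SCtx M n} (μ : M.Hom m n) :
      EqS M (WSub.lock (WSub.id (Γ := Γ)) μ) WSub.id
  | lockComp {m n : M.Mode} {Γ Δ Ξ : SCtx M n} (σ : WSub M Δ Ξ) (τ : WSub M Γ Δ)
      (μ : M.Hom m n) :
      EqS M (WSub.lock (WSub.comp σ τ) μ) (WSub.comp (WSub.lock σ μ) (WSub.lock τ μ))
  | keyNatural {m n : M.Mode} {Γ Δ : SCtx M m} (Λ Θ : LockTele M n m)
      (α : M.Cell (locks M Λ) (locks M Θ)) (σ : WSub M Γ Δ) :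
      EqS M (WSub.comp (WSub.key Δ Λ Θ α) (lockTeleW M σ Θ))
        (WSub.comp (lockTeleW M σ Λ) (WSub.key Γ Λ Θ α))
  | keyUnit {m n : M.Mode} (Γ : SCtx M m) (Λ : LockTele M n m) :
      EqS M (WSub.key Γ Λ Λ (M.cid (locks M Λ))) WSub.id
  | keyVert {m n : M.Mode} (Γ : SCtx M m) (Λ Θ Ψ : LockTele M n m)
      (α : M.Cell (locks M Λ) (locks M Θ)) (β : M.Cell (locks M Θ) (locks M Ψ)) :
      EqS M (WSub.key Γ Λ Ψ (M.vcomp α β))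
        (WSub.comp (WSub.key Γ Λ Θ α) (WSub.key Γ Θ Ψ β))
  | keyHor {m n o : M.Mode} (Γ : SCtx M m) (Λ₁ Λ₂ : LockTele M n m)
      (Θ₁ Θ₂ : LockTele M o n) (β : M.Cell (locks M Λ₁) (locks M Λ₂))
      (α : M.Cell (locks M Θ₁) (locks M Θ₂)) :
      EqS M (WSub.key Γ (appLT M Λ₁ Θ₁) (appLT M Λ₂ Θ₂)
          (castCell M (locks_append M Λ₁ Θ₁).symm (locks_append M Λ₂ Θ₂).symm
            (M.hcomp α β)))
        (castW M (appL_append M Γ Λ₂ Θ₂) (appL_append M Γ Λ₁ Θ₁)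
          (WSub.comp (lockTeleW M (WSub.key Γ Λ₁ Λ₂ β) Θ₁)
            (WSub.key (appL M Γ Λ₂) Θ₁ Θ₂ α)))
end


mutual
/-- Translation of WSMTT expressions to SFMTT expressions. -/
def trE : ∀ {m : M.Mode} {Γ : SCtx M m}, WExpr M Γ → Expr M Γ
  | _, _, .vzero μ => Expr.var (vzeroLift M μ)
  | _, _, .sub t σ => subExpr M (trE t) (trS σ)
  | _, _, .bool => .bool
  | _, _, .tt => .tt
  | _, _, .ff => .ff
  | _, _, .ifte A s t t' => .ifte (trE A) (trE s) (trE t) (trE t')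
  | _, _, .arrow μ A B => .arrow μ (trE A) (trE B)
  | _, _, .lam μ t => .lam μ (trE t)
  | _, _, .app μ f t => .app μ (trE f) (trE t)
  | _, _, .modTy μ A => .modTy μ (trE A)
  | _, _, .modTm μ t => .modTm μ (trE t)
  | _, _, .letmod μ ν A B t s => .letmod μ ν (trE A) (trE B) (trE t) (trE s)

/-- Translation of WSMTT substitutions to regular SFMTT substitutions. -/
def trS : ∀ {m : M.Mode} {Γ Δ : SCtx M m}, WSub M Γ Δ → Sub M Γ Δ
  | _, _, _, .done => Sub.snoc Sub.id ASub.done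
  | _, _, _, .id => Sub.id
  | _, _, _, .wk μ => Sub.snoc Sub.id (ASub.wk ASub.id μ)
  | _, _, _, .comp σ τ => concatSub M (trS σ) (trS τ)
  | _, _, _, .lock σ μ => lockSub M μ (trS σ)
  | _, _, _, .key Γ Θ Ψ α => Sub.snoc Sub.id (ASub.key Γ Θ Ψ α)
  | _, _, _, @WSub.ext _ _ _ _ _ σ μ t =>
      Sub.snoc (liftSub M μ (trS σ)) (ASub.ext ASub.id (trE t))
end

/-- Embedding of SFMTT variables into WSMTT expressions. -/
def embVar : ∀ {n : M.Mode} (Γ : SCtx M n) {m : M.Mode} (Θ : LockTele M m n),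
    VarIn M Γ Θ → WExpr M (appL M Γ Θ)
  | _, .empty, _, _, v => PEmpty.elim v
  | _, .lock Γ ρ, _, Θ, v => embVar Γ (.cons ρ Θ) v
  | _, .ext Γ μ, _, Θ, v =>
      match v with
      | Sum.inl ⟨h, α⟩ =>
          (by cases h; exact WExpr.sub (WExpr.vzero μ)
                (WSub.key (SCtx.ext Γ μ) (LockTele.cons μ LockTele.nil) Θ
                  (castCell M (locks_cons_nil M μ).symm rfl α)))
      | Sum.inr w => WExpr.sub (embVar Γ Θ w) (lockTeleW M (WSub.wk μ) Θ)

/-- Embedding of SFMTT expressions into WSMTT expressions. -/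
def embE : ∀ {m : M.Mode} {Γ : SCtx M m}, Expr M Γ → WExpr M Γ
  | _, _, .var v => embVar M _ LockTele.nil v
  | _, _, .bool => .bool
  | _, _, .tt => .tt
  | _, _, .ff => .ff
  | _, _, .ifte A s t t' => .ifte (embE A) (embE s) (embE t) (embE t')
  | _, _, .arrow μ A B => .arrow μ (embE A) (embE B)
  | _, _, .lam μ t => .lam μ (embE t)
  | _, _, .app μ f t => .app μ (embE f) (embE t)
  | _, _, .modTy μ A => .modTy μ (embE A)
  | _, _, .modTm μ t => .modTm μ (embE t)
  | _, _, .letmod μ ν A B t s => .letmod μ ν (embE A) (embE B) (embE t) (embE s)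

/-- Embedding of atomic SFMTT renamings into WSMTT substitutions. -/
def embARen : ∀ {m : M.Mode} {Γ Δ : SCtx M m}, ARen M Γ Δ → WSub M Γ Δ
  | _, _, _, .done => WSub.done
  | _, _, _, .id => WSub.id
  | _, _, _, .wk σ μ => WSub.comp (embARen σ) (WSub.wk μ)
  | _, _, _, .lock σ μ => WSub.lock (embARen σ) μ
  | _, _, _, .key Γ Θ Ψ α => WSub.key Γ Θ Ψ α
  | _, _, _, @ARen.ext _ _ _ _ _ σ μ v => WSub.ext (embARen σ) (embVar M _ _ v)

/-- Embedding of atomic SFMTT substitutions into WSMTT substitutions. -/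
def embASub : ∀ {m : M.Mode} {Γ Δ : SCtx M m}, ASub M Γ Δ → WSub M Γ Δ
  | _, _, _, .done => WSub.done
  | _, _, _, .id => WSub.id
  | _, _, _, .wk σ μ => WSub.comp (embASub σ) (WSub.wk μ)
  | _, _, _, .lock σ μ => WSub.lock (embASub σ) μ
  | _, _, _, .key Γ Θ Ψ α => WSub.key Γ Θ Ψ α
  | _, _, _, .ext σ t => WSub.ext (embASub σ) (embE M t)

/-- Embedding of regular SFMTT renamings into WSMTT substitutions. -/
def embRen : ∀ {m : M.Mode} {Γ Δ : SCtx M m}, Ren M Γ Δ → WSub M Γ Δ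
  | _, _, _, .id => WSub.id
  | _, _, _, .snoc σ τ => WSub.comp (embRen σ) (embARen M τ)

/-- Embedding of regular SFMTT substitutions into WSMTT substitutions. -/
def embSub : ∀ {m : M.Mode} {Γ Δ : SCtx M m}, Sub M Γ Δ → WSub M Γ Δ
  | _, _, _, .id => WSub.id
  | _, _, _, .snoc σ τ => WSub.comp (embSub σ) (embASub M τ)


/-- Cast an SFMTT expression along an equality of scoping contexts. -/
def castE {m : M.Mode} {Γ Γ' : SCtx M m} (h : Γ = Γ') (t : Expr M Γ) : Expr M Γ' :=
  h ▸ t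


/-! ### Auxiliary lemmas for the embedding theorem -/

section EmbeddingLemmas

theorem lockTeleW_nil {m : M.Mode} {Γ Δ : SCtx M m} (σ : WSub M Γ Δ) :
    lockTeleW M σ LockTele.nil = σ := by rw [lockTeleW]

theorem lockTeleW_cons {m k : M.Mode} {Γ Δ : SCtx M m} (σ : WSub M Γ Δ)
    (ρ : M.Hom k m) {n : M.Mode} (Λ : LockTele M n k) :
    lockTeleW M σ (LockTele.cons ρ Λ) = lockTeleW M (WSub.lock σ ρ) Λ := by
  rw [lockTeleW]

theorem lockTeleA_nil {m : M.Mode} {Γ Δ : SCtx M m} (σ : ARen M Γ Δ) :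
    lockTeleA M σ LockTele.nil = σ := by rw [lockTeleA]

theorem lockTeleA_cons {m k : M.Mode} {Γ Δ : SCtx M m} (σ : ARen M Γ Δ)
    (ρ : M.Hom k m) {n : M.Mode} (Λ : LockTele M n k) :
    lockTeleA M σ (LockTele.cons ρ Λ) = lockTeleA M (ARen.lock σ ρ) Λ := by
  rw [lockTeleA]

theorem castCell_heq {m n : M.Mode} {μ μ' ν ν' : M.Hom m n} (h1 : μ = μ') (h2 : ν = ν')
    (α : M.Cell μ ν) : HEq (castCell M h1 h2 α) α := by subst h1; subst h2; rfl

theorem castCell_eq {m n : M.Mode} {μ μ' ν ν' : M.Hom m n} (h1 : μ = μ') (h2 : ν = ν')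
    (α : M.Cell μ ν) (β : M.Cell μ' ν') (h : HEq α β) : castCell M h1 h2 α = β := by
  subst h1; subst h2; exact eq_of_heq h

theorem cid_heq {m n : M.Mode} {μ ν : M.Hom m n} (h : μ = ν) :
    HEq (M.cid μ) (M.cid ν) := by subst h; rfl

theorem hcomp_congr {m n o : M.Mode} {μ₁ μ₂ μ₁' μ₂' : M.Hom m n} {ν₁ ν₂ ν₁' ν₂' : M.Hom n o}
    (h1 : μ₁ = μ₁') (h2 : μ₂ = μ₂') (h3 : ν₁ = ν₁') (h4 : ν₂ = ν₂')
    {α : M.Cell μ₁ μ₂} {α' : M.Cell μ₁' μ₂'} {γ : M.Cell ν₁ ν₂} {γ' : M.Cell ν₁' ν₂'}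
    (hα : HEq α α') (hγ : HEq γ γ') : HEq (M.hcomp α γ) (M.hcomp α' γ') := by
  subst h1; subst h2; subst h3; subst h4
  rw [eq_of_heq hα, eq_of_heq hγ]

theorem hcomp_cid_comp {m n o p : M.Mode} {μ ν : M.Hom m n} (γ : M.Cell μ ν)
    (ρ₁ : M.Hom n o) (ρ₂ : M.Hom o p) :
    HEq (M.hcomp γ (M.cid (M.comp ρ₁ ρ₂)))
        (M.hcomp (M.hcomp γ (M.cid ρ₁)) (M.cid ρ₂)) := by
  rw [← M.hcomp_cid]
  exact (M.hcomp_assoc γ (M.cid ρ₁) (M.cid ρ₂)).symm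

theorem castCell_vcomp {m n : M.Mode} {μ μ' ν ρ : M.Hom m n} (h : μ = μ')
    (β : M.Cell μ ν) (δ : M.Cell ν ρ) :
    castCell M h rfl (M.vcomp β δ) = M.vcomp (castCell M h rfl β) δ := by
  subst h; rfl

theorem castW_heq {m : M.Mode} {Γ Γ' Δ Δ' : SCtx M m} (h1 : Γ = Γ') (h2 : Δ = Δ')
    (σ : WSub M Γ Δ) : HEq (castW M h1 h2 σ) σ := by subst h1; subst h2; rfl

theorem eqS_castW {m : M.Mode} {Γ Γ' Δ Δ' : SCtx M m} (h1 : Γ = Γ') (h2 : Δ = Δ')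
    {σ τ : WSub M Γ Δ} (h : EqS M σ τ) : EqS M (castW M h1 h2 σ) (castW M h1 h2 τ) := by
  subst h1; subst h2; exact h

theorem eqS_castW_symm {m : M.Mode} {Γ Γ' Δ Δ' : SCtx M m} (h1 : Γ = Γ') (h2 : Δ = Δ')
    {σ : WSub M Γ Δ} {τ : WSub M Γ' Δ'} (h : EqS M τ (castW M h1 h2 σ)) :
    EqS M (castW M h1.symm h2.symm τ) σ := by
  subst h1; subst h2; exact h

theorem eqE_transport {m : M.Mode} {Γ Γ' : SCtx M m} (h : Γ = Γ')
    {t s : WExpr M Γ} {t' s' : WExpr M Γ'} (ht : HEq t t') (hs : HEq s s')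
    (e : EqE M t s) : EqE M t' s' := by
  subst h; rw [← eq_of_heq ht, ← eq_of_heq hs]; exact e

theorem sub_heq {m : M.Mode} {Γ Γ' Δ Δ' : SCtx M m} (hΓ : Γ = Γ') (hΔ : Δ = Δ')
    {t : WExpr M Δ} {t' : WExpr M Δ'} {σ : WSub M Γ Δ} {σ' : WSub M Γ' Δ'}
    (ht : HEq t t') (hσ : HEq σ σ') : HEq (WExpr.sub t σ) (WExpr.sub t' σ') := by
  subst hΓ; subst hΔ; rw [eq_of_heq ht, eq_of_heq hσ]

theorem eqS_lockTeleW {m : M.Mode} {Γ Δ : SCtx M m} {σ τ : WSub M Γ Δ} (h : EqS M σ τ) :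
    ∀ {n : M.Mode} (Λ : LockTele M n m), EqS M (lockTeleW M σ Λ) (lockTeleW M τ Λ)
  | _, .nil => by rw [lockTeleW_nil, lockTeleW_nil]; exact h
  | _, .cons ρ Λ => by
      rw [lockTeleW_cons, lockTeleW_cons]
      exact eqS_lockTeleW (EqS.congLock ρ h) Λ

theorem lockTeleW_id {m : M.Mode} {Γ : SCtx M m} :
    ∀ {n : M.Mode} (Λ : LockTele M n m),
      EqS M (lockTeleW M (WSub.id (Γ := Γ)) Λ) WSub.id
  | _, .nil => by rw [lockTeleW_nil]; exact EqS.refl _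
  | _, .cons ρ Λ => by
      rw [lockTeleW_cons]
      exact EqS.trans (eqS_lockTeleW M (EqS.lockId ρ) Λ) (lockTeleW_id Λ)

theorem lockTeleW_comp {m : M.Mode} {Γ Δ Ξ : SCtx M m} (σ : WSub M Δ Ξ) (τ : WSub M Γ Δ) :
    ∀ {n : M.Mode} (Λ : LockTele M n m),
      EqS M (lockTeleW M (WSub.comp σ τ) Λ)
        (WSub.comp (lockTeleW M σ Λ) (lockTeleW M τ Λ))
  | _, .nil => by rw [lockTeleW_nil, lockTeleW_nil, lockTeleW_nil]; exact EqS.refl _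
  | _, .cons ρ Λ => by
      rw [lockTeleW_cons, lockTeleW_cons, lockTeleW_cons]
      exact EqS.trans (eqS_lockTeleW M (EqS.lockComp σ τ ρ) Λ)
        (lockTeleW_comp (WSub.lock σ ρ) (WSub.lock τ ρ) Λ)

theorem embVar_append : ∀ {n : M.Mode} (Γ : SCtx M n) {k : M.Mode} (Θ : LockTele M k n)
    {l : M.Mode} (Λ : LockTele M l k) (x : VarIn M Γ (appLT M Θ Λ)),
    HEq (embVar M (appL M Γ Θ) Λ (cast (varIn_append M Λ Γ Θ).symm x))
        (embVar M Γ (appLT M Θ Λ) x)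
  | _, Γ, _, .nil, _, Λ, x => HEq.rfl
  | _, Γ, _, .cons ρ Θ, _, Λ, x => embVar_append (SCtx.lock Γ ρ) Θ Λ x

theorem embVar_cast_tele {n m : M.Mode} {Γ : SCtx M n} {Θ Θ' : LockTele M m n}
    (h : Θ = Θ') (hv : VarIn M Γ Θ = VarIn M Γ Θ') (v : VarIn M Γ Θ) :
    HEq (embVar M Γ Θ' (cast hv v)) (embVar M Γ Θ v) := by
  subst h; rfl

theorem embE_varExpr {n m : M.Mode} {Γ : SCtx M n} {Λ : LockTele M m n}
    (v : VarIn M Γ Λ) : embE M (varExpr M v) = embVar M Γ Λ v := by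
  have hT : appLT M Λ LockTele.nil = Λ := appLT_nil M Λ
  have hv : VarIn M Γ Λ = VarIn M Γ (appLT M Λ LockTele.nil) := by rw [hT]
  have h3 : toVarNil M v = cast (varIn_append M LockTele.nil Γ Λ).symm (cast hv v) :=
    (cast_cast hv (varIn_append M LockTele.nil Γ Λ).symm v).symm
  show embVar M (appL M Γ Λ) LockTele.nil (toVarNil M v) = embVar M Γ Λ v
  rw [h3]
  exact eq_of_heq
    ((embVar_append M Γ Λ LockTele.nil (cast hv v)).trans
      (embVar_cast_tele M hT.symm hv v))

theorem key_cons {n m k : M.Mode} (Γ : SCtx M n) (ρ : M.Hom m n)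
    (Θ₁ Θ₂ : LockTele M k m) (δ : M.Cell (locks M Θ₁) (locks M Θ₂)) :
    EqS M (WSub.key Γ (.cons ρ Θ₁) (.cons ρ Θ₂) (M.hcomp δ (M.cid ρ)))
          (WSub.key (SCtx.lock Γ ρ) Θ₁ Θ₂ δ) := by
  have hc : castCell M (locks_append M (LockTele.cons ρ LockTele.nil) Θ₁).symm
        (locks_append M (LockTele.cons ρ LockTele.nil) Θ₂).symm
        (M.hcomp δ (M.cid (locks M (LockTele.cons ρ LockTele.nil))))
      = M.hcomp δ (M.cid ρ) := by
    apply castCell_eq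
    exact hcomp_congr M rfl rfl (M.id_comp ρ) (M.id_comp ρ) HEq.rfl (cid_heq M (M.id_comp ρ))
  have hH := EqS.keyHor (M := M) Γ (LockTele.cons ρ LockTele.nil)
    (LockTele.cons ρ LockTele.nil) Θ₁ Θ₂
    (M.cid (locks M (LockTele.cons ρ LockTele.nil))) δ
  rw [hc] at hH
  exact EqS.trans hH
    (EqS.trans
      (EqS.congComp
        (EqS.trans (eqS_lockTeleW M (EqS.keyUnit Γ (LockTele.cons ρ LockTele.nil)) Θ₁)
          (lockTeleW_id M Θ₁))
        (EqS.refl _))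
      (EqS.idLeft _))

theorem lockTeleW_key_eq {m n : M.Mode} (Γ : SCtx M m) (Θ Ψ : LockTele M n m)
    (α : M.Cell (locks M Θ) (locks M Ψ)) {k : M.Mode} (Λ : LockTele M k n) :
    EqS M
      (castW M (appL_append M Γ Ψ Λ) (appL_append M Γ Θ Λ)
        (lockTeleW M (WSub.key Γ Θ Ψ α) Λ))
      (WSub.key Γ (appLT M Θ Λ) (appLT M Ψ Λ)
        (castCell M (locks_append M Θ Λ).symm (locks_append M Ψ Λ).symm
          (M.hcomp (M.cid (locks M Λ)) α))) := by
  have hH := EqS.keyHor (M := M) Γ Θ Ψ Λ Λ α (M.cid (locks M Λ))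
  exact EqS.symm (EqS.trans hH
    (eqS_castW M _ _
      (EqS.trans (EqS.congComp (EqS.refl _) (EqS.keyUnit _ Λ)) (EqS.idRight _))))

theorem castCell_nil {n k : M.Mode} (Θ' Ψ' : LockTele M n k)
    (γ : M.Cell (locks M Θ') (locks M Ψ')) :
    castCell M (locks_append M LockTele.nil Θ').symm (locks_append M LockTele.nil Ψ').symm
      (M.hcomp γ (M.cid (locks M LockTele.nil))) = γ :=
  castCell_eq M _ _ _ _ (M.hcomp_id γ)

theorem ext_var_step {m n : M.Mode} {Γ Δ : SCtx M n} (σ' : WSub M Γ Δ) {μ : M.Hom m n}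
    (t : WExpr M (SCtx.lock Γ μ)) (Λ : LockTele M m n)
    (γ : M.Cell (locks M (LockTele.cons μ LockTele.nil)) (locks M Λ)) :
    EqE M (WExpr.sub t (WSub.key Γ (.cons μ .nil) Λ γ))
      (WExpr.sub
        (WExpr.sub (WExpr.vzero μ) (WSub.key (SCtx.ext Δ μ) (.cons μ .nil) Λ γ))
        (lockTeleW M (WSub.ext σ' t) Λ)) := by
  apply EqE.symm
  refine EqE.trans (EqE.symm (EqE.subComp _ _ _)) ?_
  refine EqE.trans
    (EqE.congSub (EqE.refl _)
      (EqS.keyNatural (LockTele.cons μ LockTele.nil) Λ γ (WSub.ext σ' t))) ?_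
  refine EqE.trans (EqE.subComp _ _ _) ?_
  rw [lockTeleW_cons, lockTeleW_nil]
  exact EqE.congSub (EqE.extVar σ' t) (EqS.refl _)

theorem embVar_transf_key {n k : M.Mode} (Θ Ψ : LockTele M n k)
    (γ : M.Cell (locks M Θ) (locks M Ψ)) :
    ∀ {l : M.Mode} (Γ : SCtx M l) (Λ : LockTele M k l) (w : VarIn M Γ (appLT M Λ Θ)),
    EqE M (embVar M Γ (appLT M Λ Ψ) (transf M γ Γ Λ w))
      (WExpr.sub (embVar M Γ (appLT M Λ Θ) w)
        (WSub.key Γ (appLT M Λ Θ) (appLT M Λ Ψ)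
          (castCell M (locks_append M Λ Θ).symm (locks_append M Λ Ψ).symm
            (M.hcomp γ (M.cid (locks M Λ))))))
  | _, .empty, _, w => w.elim
  | _, .lock Γ ρ, Λ, w => by
      have e := embVar_transf_key Θ Ψ γ Γ (.cons ρ Λ) w
      refine EqE.trans e (EqE.congSub (EqE.refl _) ?_)
      have hδ : castCell M (locks_append M (LockTele.cons ρ Λ) Θ).symm
            (locks_append M (LockTele.cons ρ Λ) Ψ).symm
            (M.hcomp γ (M.cid (locks M (LockTele.cons ρ Λ))))
          = M.hcomp
              (castCell M (locks_append M Λ Θ).symm (locks_append M Λ Ψ).symm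
                (M.hcomp γ (M.cid (locks M Λ)))) (M.cid ρ) := by
        apply castCell_eq
        refine HEq.trans (hcomp_cid_comp M γ (locks M Λ) ρ) ?_
        exact hcomp_congr M (locks_append M Λ Θ).symm (locks_append M Λ Ψ).symm rfl rfl
          (castCell_heq M _ _ _).symm HEq.rfl
      rw [hδ]
      exact key_cons M Γ ρ _ _ _
  | _, .ext Γ μ, Λ, w => by
      match w with
      | Sum.inl ⟨h, β⟩ =>
        cases h
        refine EqE.trans (EqE.congSub (EqE.refl (WExpr.vzero μ)) ?_)
          (EqE.subComp (WExpr.vzero μ) _ _)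
        rw [castCell_vcomp]
        exact EqS.keyVert _ _ _ _ _ _
      | Sum.inr w' =>
        refine EqE.trans (EqE.congSub (embVar_transf_key Θ Ψ γ Γ Λ w') (EqS.refl _)) ?_
        refine EqE.trans (EqE.symm (EqE.subComp _ _ _)) ?_
        refine EqE.trans (EqE.congSub (EqE.refl _) (EqS.keyNatural _ _ _ (WSub.wk μ))) ?_
        exact EqE.subComp _ _ _

theorem embVar_keyCase {m n : M.Mode} (Γ₀ : SCtx M m) (Θ Ψ : LockTele M n m)
    (α : M.Cell (locks M Θ) (locks M Ψ)) {k : M.Mode} (Λ : LockTele M k n)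
    (v : VarIn M (appL M Γ₀ Θ) Λ) :
    EqE M
      (embVar M (appL M Γ₀ Ψ) Λ (cast (varIn_append M Λ Γ₀ Ψ).symm
        (transf M (castCell M (locks_append M Θ Λ).symm (locks_append M Ψ Λ).symm
            (M.hcomp (M.cid (locks M Λ)) α)) Γ₀ LockTele.nil
          (cast (varIn_append M Λ Γ₀ Θ) v))))
      (WExpr.sub (embVar M (appL M Γ₀ Θ) Λ v) (lockTeleW M (WSub.key Γ₀ Θ Ψ α) Λ)) := by
  have T := embVar_transf_key M (appLT M Θ Λ) (appLT M Ψ Λ)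
    (castCell M (locks_append M Θ Λ).symm (locks_append M Ψ Λ).symm
      (M.hcomp (M.cid (locks M Λ)) α)) Γ₀ LockTele.nil (cast (varIn_append M Λ Γ₀ Θ) v)
  rw [castCell_nil] at T
  have hctxΨ : appL M Γ₀ (appLT M Ψ Λ) = appL M (appL M Γ₀ Ψ) Λ :=
    (appL_append M Γ₀ Ψ Λ).symm
  have hctxΘ : appL M Γ₀ (appLT M Θ Λ) = appL M (appL M Γ₀ Θ) Λ :=
    (appL_append M Γ₀ Θ Λ).symm
  have hcc : cast (varIn_append M Λ Γ₀ Θ).symm (cast (varIn_append M Λ Γ₀ Θ) v) = v := by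
    simp
  have hTh : HEq
      (embVar M Γ₀ (appLT M Θ Λ) (cast (varIn_append M Λ Γ₀ Θ) v))
      (embVar M (appL M Γ₀ Θ) Λ v) := by
    have h2 := embVar_append M Γ₀ Θ Λ (cast (varIn_append M Λ Γ₀ Θ) v)
    rw [hcc] at h2
    exact h2.symm
  refine EqE.trans
    (eqE_transport M hctxΨ
      (embVar_append M Γ₀ Ψ Λ _).symm
      (sub_heq M hctxΨ hctxΘ hTh (castW_heq M hctxΨ hctxΘ _).symm)
      T) ?_
  refine EqE.congSub (EqE.refl _) ?_
  exact eqS_castW_symm M (appL_append M Γ₀ Ψ Λ) (appL_append M Γ₀ Θ Λ)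
    (EqS.symm (lockTeleW_key_eq M Γ₀ Θ Ψ α Λ))

theorem embVar_aren : ∀ {m : M.Mode} {Γ Δ : SCtx M m} (τ : ARen M Γ Δ)
    {n : M.Mode} (Λ : LockTele M n m) (v : VarIn M Δ Λ),
    EqE M (embVar M Γ Λ (arenVar M τ Λ v))
      (WExpr.sub (embVar M Δ Λ v) (lockTeleW M (embARen M τ) Λ))
  | _, _, _, .id, _, Λ, v =>
      EqE.symm (EqE.trans (EqE.congSub (EqE.refl _) (lockTeleW_id M Λ)) (EqE.subId _))
  | _, _, _, .done, _, _, v => v.elim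
  | _, _, _, .wk σ μ, _, Λ, v => by
      refine EqE.trans (EqE.congSub (embVar_aren σ Λ v) (EqS.refl _)) ?_
      refine EqE.trans (EqE.symm (EqE.subComp _ _ _)) ?_
      exact EqE.congSub (EqE.refl _) (EqS.symm (lockTeleW_comp M _ _ Λ))
  | _, _, _, .lock σ μ, _, Λ, v => by
      have e := embVar_aren σ (.cons μ Λ) v
      rwa [lockTeleW_cons] at e
  | _, _, _, .key Γ₀ Θ Ψ α, _, Λ, v => embVar_keyCase M Γ₀ Θ Ψ α Λ v
  | _, _, _, @ARen.ext _ _ _ Γ Δ σ μ w, _, Λ, v => by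
      match v with
      | Sum.inl ⟨h, β⟩ =>
        cases h
        refine EqE.trans
          (embVar_transf_key M (LockTele.cons μ LockTele.nil) Λ
            (castCell M (locks_cons_nil M μ).symm rfl β) Γ LockTele.nil w) ?_
        rw [castCell_nil]
        exact ext_var_step M (embARen M σ) (embVar M Γ (LockTele.cons μ LockTele.nil) w) Λ
          (castCell M (locks_cons_nil M μ).symm rfl β)
      | Sum.inr v' =>
        refine EqE.trans (embVar_aren σ Λ v') ?_
        refine EqE.trans
          (EqE.congSub (EqE.refl _)
            (eqS_lockTeleW M
              (EqS.symm (EqS.extWeaken (embARen M σ)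
                (embVar M Γ (LockTele.cons μ LockTele.nil) w))) Λ)) ?_
        refine EqE.trans (EqE.congSub (EqE.refl _) (lockTeleW_comp M _ _ Λ)) ?_
        exact EqE.subComp _ _ _

theorem embARen_lockTeleA {m : M.Mode} {Γ Δ : SCtx M m} (σ : ARen M Γ Δ) :
    ∀ {n : M.Mode} (Λ : LockTele M n m),
      embARen M (lockTeleA M σ Λ) = lockTeleW M (embARen M σ) Λ
  | _, .nil => by rw [lockTeleA_nil, lockTeleW_nil]; rfl
  | _, .cons ρ Λ => by
      rw [lockTeleA_cons, lockTeleW_cons]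
      exact embARen_lockTeleA (ARen.lock σ ρ) Λ

theorem embVar_vzeroLift {m k : M.Mode} {Γ : SCtx M k} (μ : M.Hom m k) :
    EqE M (embVar M (SCtx.ext Γ μ) (.cons μ .nil) (vzeroLift M μ)) (WExpr.vzero μ) := by
  refine EqE.trans (EqE.congSub (EqE.refl (WExpr.vzero μ)) ?_) (EqE.subId _)
  have hc : castCell M (locks_cons_nil M μ).symm rfl
      (castCell M rfl (locks_cons_nil M μ).symm (M.cid μ))
      = M.cid (locks M (LockTele.cons μ LockTele.nil)) := by
    apply castCell_eq
    exact HEq.trans (castCell_heq M _ _ _) (cid_heq M (locks_cons_nil M μ).symm)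
  rw [hc]
  exact EqS.keyUnit _ _

theorem embARen_liftA {m k : M.Mode} {Γ Δ : SCtx M k} (σ : ARen M Γ Δ) (μ : M.Hom m k) :
    EqS M (embARen M (liftA M σ μ)) (wlift M (embARen M σ) μ) :=
  EqS.congExt (EqS.refl _) (embVar_vzeroLift M μ)

theorem embE_aren : ∀ {m : M.Mode} {Δ : SCtx M m} (t : Expr M Δ)
    {Γ : SCtx M m} (τ : ARen M Γ Δ),
    EqE M (embE M (arenExpr M t τ)) (WExpr.sub (embE M t) (embARen M τ))
  | _, _, .var v, _, τ => by
      have e := embVar_aren M τ LockTele.nil v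
      rwa [lockTeleW_nil] at e
  | _, _, .bool, _, τ => EqE.symm (EqE.boolSub _)
  | _, _, .tt, _, τ => EqE.symm (EqE.ttSub _)
  | _, _, .ff, _, τ => EqE.symm (EqE.ffSub _)
  | _, _, .ifte A s t t', _, τ =>
      EqE.trans
        (EqE.congIfte
          (EqE.trans (embE_aren A _) (EqE.congSub (EqE.refl _) (embARen_liftA M τ _)))
          (embE_aren s τ) (embE_aren t τ) (embE_aren t' τ))
        (EqE.symm (EqE.ifteSub _ _ _ _ _))
  | _, _, .arrow μ A B, _, τ =>
      EqE.trans
        (EqE.congArrow μ (embE_aren A (ARen.lock τ μ))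
          (EqE.trans (embE_aren B _) (EqE.congSub (EqE.refl _) (embARen_liftA M τ μ))))
        (EqE.symm (EqE.arrowSub _ _ _ _))
  | _, _, .lam μ t, _, τ =>
      EqE.trans
        (EqE.congLam μ
          (EqE.trans (embE_aren t _) (EqE.congSub (EqE.refl _) (embARen_liftA M τ μ))))
        (EqE.symm (EqE.lamSub _ _ _))
  | _, _, .app μ f t, _, τ =>
      EqE.trans
        (EqE.congApp μ (embE_aren f τ) (embE_aren t (ARen.lock τ μ)))
        (EqE.symm (EqE.appSub _ _ _ _))
  | _, _, .modTy μ A, _, τ =>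
      EqE.trans (EqE.congModTy μ (embE_aren A (ARen.lock τ μ)))
        (EqE.symm (EqE.modTySub _ _ _))
  | _, _, .modTm μ t, _, τ =>
      EqE.trans (EqE.congModTm μ (embE_aren t (ARen.lock τ μ)))
        (EqE.symm (EqE.modTmSub _ _ _))
  | _, _, .letmod μ ν A B t s, _, τ =>
      EqE.trans
        (EqE.congLetmod μ ν
          (embE_aren A (ARen.lock (ARen.lock τ ν) μ))
          (EqE.trans (embE_aren B _) (EqE.congSub (EqE.refl _) (embARen_liftA M τ ν)))
          (embE_aren t (ARen.lock τ ν))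
          (EqE.trans (embE_aren s _) (EqE.congSub (EqE.refl _) (embARen_liftA M τ _))))
        (EqE.symm (EqE.letmodSub _ _ _ _ _ _ _))

theorem embE_asub_var : ∀ {m : M.Mode} {Γ Δ : SCtx M m} (σ : ASub M Γ Δ)
    {n : M.Mode} (Λ : LockTele M n m) (v : VarIn M Δ Λ),
    EqE M (embE M (asubVar M σ Λ v))
      (WExpr.sub (embVar M Δ Λ v) (lockTeleW M (embASub M σ) Λ))
  | m, Γ, _, .id, _, Λ, v => by
      have h : embE M (asubVar M (ASub.id (Γ := Γ)) Λ v) = embVar M Γ Λ v :=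
        embE_varExpr M v
      rw [h]
      exact EqE.symm (EqE.trans (EqE.congSub (EqE.refl _) (lockTeleW_id M Λ)) (EqE.subId _))
  | _, _, _, .done, _, _, v => v.elim
  | _, _, _, .wk σ μ, _, Λ, v => by
      refine EqE.trans (embE_aren M _ (lockTeleA M (piA M μ) Λ)) ?_
      rw [embARen_lockTeleA]
      refine EqE.trans
        (EqE.congSub (embE_asub_var σ Λ v) (eqS_lockTeleW M (EqS.idLeft (WSub.wk μ)) Λ)) ?_
      refine EqE.trans (EqE.symm (EqE.subComp _ _ _)) ?_
      exact EqE.congSub (EqE.refl _) (EqS.symm (lockTeleW_comp M _ _ Λ))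
  | _, _, _, .lock σ μ, _, Λ, v => by
      have e := embE_asub_var σ (.cons μ Λ) v
      rwa [lockTeleW_cons] at e
  | _, _, _, .key Γ₀ Θ Ψ α, _, Λ, v => by
      have h : embE M (asubVar M (ASub.key Γ₀ Θ Ψ α) Λ v)
          = embVar M (appL M Γ₀ Ψ) Λ (cast (varIn_append M Λ Γ₀ Ψ).symm
              (transf M (castCell M (locks_append M Θ Λ).symm (locks_append M Ψ Λ).symm
                  (M.hcomp (M.cid (locks M Λ)) α)) Γ₀ LockTele.nil
                (cast (varIn_append M Λ Γ₀ Θ) v))) :=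
        embE_varExpr M _
      rw [h]
      exact embVar_keyCase M Γ₀ Θ Ψ α Λ v
  | _, _, _, @ASub.ext _ _ _ Γ Δ σ μ t, _, Λ, v => by
      match v with
      | Sum.inl ⟨h, β⟩ =>
        cases h
        refine EqE.trans
          (embE_aren M t (ARen.key Γ (LockTele.cons μ LockTele.nil) Λ
            (castCell M (locks_cons_nil M μ).symm rfl β))) ?_
        exact ext_var_step M (embASub M σ) (embE M t) Λ
          (castCell M (locks_cons_nil M μ).symm rfl β)
      | Sum.inr v' =>
        refine EqE.trans (embE_asub_var σ Λ v') ?_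
        refine EqE.trans
          (EqE.congSub (EqE.refl _)
            (eqS_lockTeleW M
              (EqS.symm (EqS.extWeaken (embASub M σ) (embE M t))) Λ)) ?_
        refine EqE.trans (EqE.congSub (EqE.refl _) (lockTeleW_comp M _ _ Λ)) ?_
        exact EqE.subComp _ _ _

theorem embASub_liftS {m k : M.Mode} {Γ Δ : SCtx M k} (σ : ASub M Γ Δ) (μ : M.Hom m k) :
    EqS M (embASub M (liftS M σ μ)) (wlift M (embASub M σ) μ) :=
  EqS.congExt (EqS.refl _) (embVar_vzeroLift M μ)

theorem embE_asub : ∀ {m : M.Mode} {Δ : SCtx M m} (t : Expr M Δ)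
    {Γ : SCtx M m} (τ : ASub M Γ Δ),
    EqE M (embE M (asubExpr M t τ)) (WExpr.sub (embE M t) (embASub M τ))
  | _, _, .var v, _, τ => by
      have e := embE_asub_var M τ LockTele.nil v
      rwa [lockTeleW_nil] at e
  | _, _, .bool, _, τ => EqE.symm (EqE.boolSub _)
  | _, _, .tt, _, τ => EqE.symm (EqE.ttSub _)
  | _, _, .ff, _, τ => EqE.symm (EqE.ffSub _)
  | _, _, .ifte A s t t', _, τ =>
      EqE.trans
        (EqE.congIfte
          (EqE.trans (embE_asub A _) (EqE.congSub (EqE.refl _) (embASub_liftS M τ _)))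
          (embE_asub s τ) (embE_asub t τ) (embE_asub t' τ))
        (EqE.symm (EqE.ifteSub _ _ _ _ _))
  | _, _, .arrow μ A B, _, τ =>
      EqE.trans
        (EqE.congArrow μ (embE_asub A (ASub.lock τ μ))
          (EqE.trans (embE_asub B _) (EqE.congSub (EqE.refl _) (embASub_liftS M τ μ))))
        (EqE.symm (EqE.arrowSub _ _ _ _))
  | _, _, .lam μ t, _, τ =>
      EqE.trans
        (EqE.congLam μ
          (EqE.trans (embE_asub t _) (EqE.congSub (EqE.refl _) (embASub_liftS M τ μ))))
        (EqE.symm (EqE.lamSub _ _ _))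
  | _, _, .app μ f t, _, τ =>
      EqE.trans
        (EqE.congApp μ (embE_asub f τ) (embE_asub t (ASub.lock τ μ)))
        (EqE.symm (EqE.appSub _ _ _ _))
  | _, _, .modTy μ A, _, τ =>
      EqE.trans (EqE.congModTy μ (embE_asub A (ASub.lock τ μ)))
        (EqE.symm (EqE.modTySub _ _ _))
  | _, _, .modTm μ t, _, τ =>
      EqE.trans (EqE.congModTm μ (embE_asub t (ASub.lock τ μ)))
        (EqE.symm (EqE.modTmSub _ _ _))
  | _, _, .letmod μ ν A B t s, _, τ =>
      EqE.trans
        (EqE.congLetmod μ ν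
          (embE_asub A (ASub.lock (ASub.lock τ ν) μ))
          (EqE.trans (embE_asub B _) (EqE.congSub (EqE.refl _) (embASub_liftS M τ ν)))
          (embE_asub t (ASub.lock τ ν))
          (EqE.trans (embE_asub s _) (EqE.congSub (EqE.refl _) (embASub_liftS M τ _))))
        (EqE.symm (EqE.letmodSub _ _ _ _ _ _ _))

theorem subExpr_id {m : M.Mode} {Δ : SCtx M m} (t : Expr M Δ) :
    subExpr M t Sub.id = t := by simp [subExpr]

theorem subExpr_snoc {m : M.Mode} {Γ Δ Ξ : SCtx M m} (t : Expr M Ξ)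
    (σ : Sub M Δ Ξ) (τ : ASub M Γ Δ) :
    subExpr M t (Sub.snoc σ τ) = asubExpr M (subExpr M t σ) τ := by simp [subExpr]

theorem embSub_id {m : M.Mode} {Γ : SCtx M m} :
    embSub M (Sub.id (Γ := Γ)) = WSub.id := by simp [embSub]

theorem embSub_snoc {m : M.Mode} {Γ Δ Ξ : SCtx M m} (σ : Sub M Δ Ξ) (τ : ASub M Γ Δ) :
    embSub M (Sub.snoc σ τ) = WSub.comp (embSub M σ) (embASub M τ) := by simp [embSub]

theorem emb_subExpr_aux {m : M.Mode} {Δ : SCtx M m} (t : Expr M Δ) :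
    ∀ {Γ : SCtx M m} (σ : Sub M Γ Δ),
      EqE M (embE M (subExpr M t σ)) (WExpr.sub (embE M t) (embSub M σ))
  | _, .id => by
      rw [subExpr_id, embSub_id]
      exact EqE.symm (EqE.subId _)
  | _, .snoc σ' τ => by
      rw [subExpr_snoc, embSub_snoc]
      exact EqE.trans (embE_asub M (subExpr M t σ') τ)
        (EqE.trans (EqE.congSub (emb_subExpr_aux t σ') (EqS.refl (embASub M τ)))
          (EqE.symm (EqE.subComp (embE M t) (embSub M σ') (embASub M τ))))

end EmbeddingLemmas


/-- The embedding commutes with substitution application up to σ-equivalence. -/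
theorem emb_subExpr (M : ModeTheory) {m : M.Mode} {Γ Δ : SCtx M m}
    (t : Expr M Δ) (σ : Sub M Γ Δ) :
    EqE M (embE M (subExpr M t σ)) (WExpr.sub (embE M t) (embSub M σ)) :=
  emb_subExpr_aux M t σ

end MTT
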